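/- Let ρ : (0,1] → ℝ be a nonnegative measurable function with r ↦ r ρ(r) integrable on (0,1), let r* ∈ (0,1] be such that the map r ↦ r ρ(r) is nondecreasing on (0, r*], and let s > 0 satisfy r* s ≥ π/√2. Then ∫₀^{r*} r ρ(r) cos(s r) dr ≤ max{ ∫₀^{r*/√2} r ρ(r) dr , ∫_{(3/7)r*}^{r*} r ρ(r) dr }. -/

import Mathlib

open Real MeasureTheory intervalIntegral Set

/-!
Put `T = π / s`. Extended by zero to the left of `0`, `f` stays monotone, and on each window
`[(2k - 1/2) T, (2k + 3/2) T]` the shift `r ↦ r + T` maps the half where `cos (s r) ≥ 0` onto the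
half where it is `≤ 0` with the opposite sign, so monotonicity makes every window contribute `≤ 0`.
If `R s ≤ 3π/2`, the cosine is `≤ 0` on `[R/√2, R]`, and `cos ≤ 1` bounds what is left by
`∫₀^{R/√2} f`. Otherwise cut at the last window endpoint `a ≤ R`: what remains is at most `∫ₐᴿ f`,
and `a ≥ 3T/2`, `R < a + 2T` force `a ≥ 3R/7`.
-/

theorem IntervalIntegrable.mono_set_of_le {f : ℝ → ℝ} {μ : Measure ℝ} {a b c d : ℝ}
    (hf : IntervalIntegrable f μ a b) (hac : a ≤ c) (hcd : c ≤ d) (hdb : d ≤ b) :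
    IntervalIntegrable f μ c d :=
  hf.mono_set <| by
    rw [uIcc_of_le hcd, uIcc_of_le (hac.trans (hcd.trans hdb))]
    exact Icc_subset_Icc hac hdb

section IndicatorIoi

variable {f : ℝ → ℝ} {c a : ℝ}

theorem intervalIntegrable_indicator_Ioi_zero (hf : IntervalIntegrable f volume 0 a)
    (hc : c ≤ 0) (ha : 0 ≤ a) : IntervalIntegrable ((Ioi 0).indicator f) volume c a := by
  rw [intervalIntegrable_iff_integrableOn_Ioc_of_le (hc.trans ha),
    integrableOn_indicator_iff measurableSet_Ioi, inter_comm, Ioc_inter_Ioi, max_eq_right hc]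
  exact hf.1

theorem integral_indicator_Ioi_zero (hc : c ≤ 0) (ha : 0 ≤ a) :
    ∫ r in c..a, (Ioi 0).indicator f r = ∫ r in 0..a, f r := by
  rw [integral_of_le (hc.trans ha), integral_of_le ha, setIntegral_indicator measurableSet_Ioi,
    Ioc_inter_Ioi, max_eq_right hc]

theorem monotoneOn_indicator_Ioi_zero {R : ℝ} (hpos : ∀ r ∈ Ioc 0 R, 0 ≤ f r)
    (hmono : MonotoneOn f (Ioc 0 R)) : MonotoneOn ((Ioi 0).indicator f) (Iic R) := by
  intro x hx y hy hxy
  by_cases hx0 : 0 < x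
  · have hy0 : 0 < y := hx0.trans_le hxy
    rw [indicator_of_mem (show x ∈ Ioi 0 from hx0), indicator_of_mem (show y ∈ Ioi 0 from hy0)]
    exact hmono ⟨hx0, hx⟩ ⟨hy0, hy⟩ hxy
  · rw [indicator_of_notMem (show x ∉ Ioi 0 from hx0)]
    exact indicator_apply_nonneg fun hy0 => hpos y ⟨hy0, hy⟩

end IndicatorIoi

section Cosine

variable {g : ℝ → ℝ} {s T : ℝ}

theorem integral_mul_cos_two_half_periods_nonpos {p : ℝ} (hT : 0 ≤ T) (hsT : s * T = π)
    (hg : IntervalIntegrable g volume p (p + 2 * T))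
    (hcos_nonneg : ∀ r ∈ Icc p (p + T), 0 ≤ cos (s * r))
    (hshift : ∀ r ∈ Icc p (p + T), g r ≤ g (r + T)) :
    ∫ r in p..p + 2 * T, g r * cos (s * r) ≤ 0 := by
  have hcos : Continuous fun r => cos (s * r) := by fun_prop
  rw [two_mul, ← add_assoc] at hg ⊢
  have hg₁ := (hg.mono_set_of_le (d := p + T) le_rfl (by linarith) (by linarith)).mul_continuousOn
    hcos.continuousOn
  have hg₂ := hg.mono_set_of_le (c := p + T) (by linarith) (by linarith) le_rfl
  have hg₂' : IntervalIntegrable (fun r => g (r + T)) volume p (p + T) := by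
    simpa using hg₂.comp_add_right T
  have hshifted : ∫ r in p + T..p + T + T, g r * cos (s * r)
      = -∫ r in p..p + T, g (r + T) * cos (s * r) := by
    rw [← integral_comp_add_right (fun r => g r * cos (s * r)), ← intervalIntegral.integral_neg]
    congr with r
    rw [mul_add, hsT, cos_add_pi, mul_neg]
  rw [← integral_add_adjacent_intervals hg₁ (hg₂.mul_continuousOn hcos.continuousOn),
    hshifted, ← sub_eq_add_neg, sub_nonpos]
  exact integral_mono_on (by linarith) hg₁ (hg₂'.mul_continuousOn hcos.continuousOn)
    fun r hr => mul_le_mul_of_nonneg_right (hshift r hr) (hcos_nonneg r hr)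

theorem integral_mul_cos_nonpos_of_monotoneOn (hT : 0 ≤ T) (hsT : s * T = π) (n : ℕ)
    (hg : IntervalIntegrable g volume (-(T / 2)) (-(T / 2) + n * (2 * T)))
    (hmono : MonotoneOn g (Icc (-(T / 2)) (-(T / 2) + n * (2 * T)))) :
    ∫ r in -(T / 2)..-(T / 2) + n * (2 * T), g r * cos (s * r) ≤ 0 := by
  have hs : 0 ≤ s := by nlinarith [pi_pos]
  obtain ⟨a, ha⟩ : ∃ a : ℕ → ℝ, a = fun k : ℕ => -(T / 2) + k * (2 * T) := ⟨_, rfl⟩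
  have ha₀ : a 0 = -(T / 2) := by simp [ha]
  have haₙ : a n = -(T / 2) + n * (2 * T) := by simp [ha]
  rw [← haₙ, ← ha₀] at hg hmono ⊢
  have hnext : ∀ k, a (k + 1) = a k + 2 * T := fun k => by simp only [ha]; push_cast; ring
  have hsub : ∀ k < n, a 0 ≤ a k ∧ a k + 2 * T ≤ a n := fun k hk => by
    have : (k : ℝ) + 1 ≤ n := by exact_mod_cast hk
    simp only [ha]
    constructor <;> nlinarith
  have hpiece : ∀ k < n, IntervalIntegrable g volume (a k) (a k + 2 * T) := fun k hk =>
    hg.mono_set_of_le (hsub k hk).1 (by linarith) (hsub k hk).2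
  rw [← sum_integral_adjacent_intervals fun k hk => by
    rw [hnext]
    exact (hpiece k hk).mul_continuousOn (by fun_prop)]
  refine Finset.sum_nonpos fun k hk => ?_
  obtain ⟨hk₀, hkₙ⟩ := hsub k (Finset.mem_range.1 hk)
  rw [hnext]
  refine integral_mul_cos_two_half_periods_nonpos hT hsT (hpiece k (Finset.mem_range.1 hk))
    (fun r hr => ?_) fun r hr => hmono ⟨by linarith [hr.1], by linarith [hr.2]⟩
      ⟨by linarith [hr.1], by linarith [hr.2]⟩ (by linarith)
  have hsa : s * a k = k * (2 * π) - π / 2 := by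
    simp only [ha]; linear_combination (2 * k - 1 / 2) * hsT
  rw [← cos_sub_nat_mul_two_pi _ k]
  apply cos_nonneg_of_mem_Icc
  constructor <;> nlinarith [hr.1, hr.2]

end Cosine

section Bounds

variable {f : ℝ → ℝ} {s : ℝ}

theorem integral_mul_cos_le_integral {a b : ℝ} (hab : a ≤ b)
    (hf : IntervalIntegrable f volume a b) (hpos : ∀ r ∈ Ioo a b, 0 ≤ f r) :
    ∫ r in a..b, f r * cos (s * r) ≤ ∫ r in a..b, f r :=
  integral_mono_on_of_le_Ioo hab (hf.mul_continuousOn (by fun_prop)) hf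
    fun r hr => mul_le_of_le_one_right (hpos r hr) (cos_le_one _)

theorem integral_mul_cos_le_integral_of_cos_nonpos {b R : ℝ} (hb : 0 ≤ b) (hbR : b ≤ R)
    (hf : IntervalIntegrable f volume 0 R) (hpos : ∀ r ∈ Ioc 0 R, 0 ≤ f r)
    (hcos : ∀ r ∈ Icc b R, cos (s * r) ≤ 0) :
    ∫ r in 0..R, f r * cos (s * r) ≤ ∫ r in 0..b, f r := by
  have hf₁ := hf.mono_set_of_le le_rfl hb hbR
  have hf₂ := (hf.mono_set_of_le hb hbR le_rfl).mul_continuousOn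
    (by fun_prop : ContinuousOn (fun r => cos (s * r)) (uIcc b R))
  have hhead := integral_mul_cos_le_integral (s := s) hb hf₁
    fun r hr => hpos r ⟨hr.1, hr.2.le.trans hbR⟩
  have htail : ∫ r in b..R, f r * cos (s * r) ≤ ∫ r in b..R, (0 : ℝ) :=
    integral_mono_on_of_le_Ioo hbR hf₂ intervalIntegrable_const fun r hr =>
      mul_nonpos_of_nonneg_of_nonpos (hpos r ⟨hb.trans_lt hr.1, hr.2.le⟩)
        (hcos r (Ioo_subset_Icc_self hr))
  rw [intervalIntegral.integral_zero] at htail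
  rw [← integral_add_adjacent_intervals (hf₁.mul_continuousOn (by fun_prop)) hf₂]
  linarith

theorem exists_nat_grid_point_le_lt {T R : ℝ} (hT : 0 < T) (hR : 3 * T / 2 ≤ R) :
    ∃ n : ℕ, 3 * T / 2 ≤ -(T / 2) + n * (2 * T) ∧ -(T / 2) + n * (2 * T) ≤ R ∧
      R < -(T / 2) + n * (2 * T) + 2 * T := by
  have h2T : 0 < 2 * T := by positivity
  obtain ⟨n, hn, hle, hlt⟩ : ∃ n : ℕ, 1 ≤ n ∧ (n : ℝ) * (2 * T) ≤ R + T / 2 ∧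
      R + T / 2 < (n + 1) * (2 * T) := by
    have hx : 1 ≤ (R + T / 2) / (2 * T) := by rw [le_div_iff₀ h2T]; linarith
    exact ⟨_, Nat.le_floor (by exact_mod_cast hx), (le_div_iff₀ h2T).1 (Nat.floor_le (by linarith)),
      (div_lt_iff₀ h2T).1 (Nat.lt_floor_add_one _)⟩
  have hnT := mul_le_mul_of_nonneg_right (Nat.one_le_cast.2 hn : (1 : ℝ) ≤ n) h2T.le
  exact ⟨n, by linarith, by linarith, by linarith⟩

theorem integral_mul_cos_le_integral_of_three_pi_div_two_le {R : ℝ}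
    (hf : IntervalIntegrable f volume 0 R) (hpos : ∀ r ∈ Ioc 0 R, 0 ≤ f r)
    (hmono : MonotoneOn f (Ioc 0 R)) (hs : 0 < s) (hR : 3 * π / 2 ≤ R * s) :
    ∫ r in 0..R, f r * cos (s * r) ≤ ∫ r in 3 / 7 * R..R, f r := by
  have hT : 0 < π / s := div_pos pi_pos hs
  have hsT : s * (π / s) = π := mul_div_cancel₀ _ hs.ne'
  have hTR : 3 * (π / s) / 2 ≤ R :=
    calc 3 * (π / s) / 2 = 3 * π / 2 / s := by ring
      _ ≤ R := (div_le_iff₀ hs).2 hR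
  obtain ⟨n, han, haR, hRa⟩ := exists_nat_grid_point_le_lt hT hTR
  set a := -(π / s / 2) + n * (2 * (π / s))
  have ha : 0 ≤ a := by linarith
  have hfa := hf.mono_set_of_le le_rfl ha haR
  have hfaR := hf.mono_set_of_le ha haR le_rfl
  have hhead : ∫ r in 0..a, f r * cos (s * r) ≤ 0 := by
    rw [← integral_indicator_Ioi_zero (by linarith : -(π / s / 2) ≤ 0) ha]
    simp_rw [indicator_mul_left]
    exact integral_mul_cos_nonpos_of_monotoneOn hT.le hsT n
      (intervalIntegrable_indicator_Ioi_zero hfa (by linarith) ha)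
      ((monotoneOn_indicator_Ioi_zero hpos hmono).mono fun r hr => hr.2.trans haR)
  have htail := integral_mul_cos_le_integral (s := s) haR hfaR
    fun r hr => hpos r ⟨ha.trans_lt hr.1, hr.2.le⟩
  have hR₀ : 0 ≤ 3 / 7 * R := by linarith
  have hwiden : ∫ r in a..R, f r ≤ ∫ r in 3 / 7 * R..R, f r :=
    integral_mono_interval (by linarith) haR le_rfl
      (ae_restrict_of_forall_mem measurableSet_Ioc fun r hr => hpos r ⟨hR₀.trans_lt hr.1, hr.2⟩)
      (hf.mono_set_of_le hR₀ (by linarith) le_rfl)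
  rw [← integral_add_adjacent_intervals (hfa.mul_continuousOn (by fun_prop))
    (hfaR.mul_continuousOn (by fun_prop))]
  linarith

theorem integral_mul_cos_le_max {R : ℝ} (hf : IntervalIntegrable f volume 0 R)
    (hpos : ∀ r ∈ Ioc 0 R, 0 ≤ f r) (hmono : MonotoneOn f (Ioc 0 R)) (hs : 0 < s)
    (hRs : π / √2 ≤ R * s) :
    ∫ r in 0..R, f r * cos (s * r) ≤ max (∫ r in 0..R / √2, f r) (∫ r in 3 / 7 * R..R, f r) := by
  rcases le_or_gt (R * s) (3 * π / 2) with hR | hR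
  · have hR₀ : 0 < R := by nlinarith [div_pos pi_pos (sqrt_pos.2 two_pos)]
    have hhalf : π / 2 ≤ s * (R / √2) := by
      calc π / 2 = π / √2 / √2 := by rw [div_div, mul_self_sqrt zero_le_two]
        _ ≤ R * s / √2 := by gcongr
        _ = s * (R / √2) := by ring
    refine (integral_mul_cos_le_integral_of_cos_nonpos (by positivity)
      (div_le_self hR₀.le one_lt_sqrt_two.le) hf hpos fun r hr => ?_).trans (le_max_left _ _)
    apply cos_nonpos_of_pi_div_two_le_of_le
    · nlinarith [hr.1]
    · nlinarith [hr.2]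
  · exact (integral_mul_cos_le_integral_of_three_pi_div_two_le hf hpos hmono hs hR.le).trans
      (le_max_right _ _)

end Bounds

theorem integral_r_rho_cos_le_max (ρ : ℝ → ℝ)
    (hnonneg : ∀ r ∈ Set.Ioc (0:ℝ) 1, 0 ≤ ρ r)
    (hint : IntervalIntegrable (fun r => r * ρ r) volume 0 1)
    (rs : ℝ) (hrs : rs ∈ Set.Ioc (0:ℝ) 1)
    (hmono : MonotoneOn (fun r => r * ρ r) (Set.Ioc (0:ℝ) rs))
    (s : ℝ) (hs : 0 < s) (hrss : π / Real.sqrt 2 ≤ rs * s) :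
    (∫ r in (0:ℝ)..rs, r * ρ r * Real.cos (s * r))
      ≤ max (∫ r in (0:ℝ)..(rs / Real.sqrt 2), r * ρ r)
            (∫ r in ((3 / 7) * rs)..rs, r * ρ r) :=
  integral_mul_cos_le_max (hint.mono_set_of_le le_rfl hrs.1.le hrs.2)
    (fun r hr => mul_nonneg hr.1.le (hnonneg r ⟨hr.1, hr.2.trans hrs.2⟩)) hmono hs hrss
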